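/- Let σ ∈ (0, 1], let φ : [-1, 1] → ℝ be L-Lipschitz, and write Δ_s := max_{|t| ≤ s} |φ(t) - φ(0)| for s ∈ (0, 1]. Let 0 < h ≤ σ/4, let ω₁ > 0, and let ν ∈ (0, ω₁/(2L)]. Let v ∈ ℝ with 1/2 ≤ |v| ≤ 2, and let φ̃ : [-1, 1] → ℝ satisfy |φ̃(t) - φ(v t)| ≤ ω₁ for all t with |t| ≤ 1 and |v|·|t| ≤ σ/2. Define Δ̃ := max_{k : |kν| ≤ h} |φ̃(kν) - φ̃(0)| (maximum over integers k). Then Δ_{h/2} - 3ω₁ ≤ Δ̃ ≤ Δ_{2h} + 3ω₁. -/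
import Mathlib

/-- Grid point near `s`, truncated toward zero. -/
lemma grid_pt (s ν : ℝ) (hν : 0 < ν) :
    ∃ k : ℤ, |(k : ℝ) * ν| ≤ |s| ∧ |(k : ℝ) * ν - s| ≤ ν := by
  have hν' : ν ≠ 0 := ne_of_gt hν
  rcases le_or_gt 0 s with hs | hs
  · refine ⟨⌊s / ν⌋, ?_, ?_⟩
    · have h0 : (0 : ℝ) ≤ (⌊s / ν⌋ : ℝ) := by
        exact_mod_cast Int.floor_nonneg.2 (by positivity)
      have h1 : (⌊s / ν⌋ : ℝ) ≤ s / ν := Int.floor_le _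
      have h2 : (⌊s / ν⌋ : ℝ) * ν ≤ s := by
        have := mul_le_mul_of_nonneg_right h1 hν.le
        rwa [div_mul_cancel₀ _ hν'] at this
      rw [abs_of_nonneg (by positivity), abs_of_nonneg hs]; exact h2
    · have h1 : (⌊s / ν⌋ : ℝ) ≤ s / ν := Int.floor_le _
      have h3 : s / ν - 1 < (⌊s / ν⌋ : ℝ) := Int.sub_one_lt_floor _
      have h2 : (⌊s / ν⌋ : ℝ) * ν ≤ s := by
        have := mul_le_mul_of_nonneg_right h1 hν.le
        rwa [div_mul_cancel₀ _ hν'] at this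
      have h4 : s - ν ≤ (⌊s / ν⌋ : ℝ) * ν := by
        have := mul_le_mul_of_nonneg_right (le_of_lt h3) (le_of_lt hν)
        calc s - ν = (s / ν - 1) * ν := by field_simp
          _ ≤ (⌊s / ν⌋ : ℝ) * ν := this
      rw [abs_le]; constructor <;> linarith
  · refine ⟨⌈s / ν⌉, ?_, ?_⟩
    · have h0 : (⌈s / ν⌉ : ℝ) ≤ 0 := by
        exact_mod_cast Int.ceil_le.2
          (by push_cast; exact le_of_lt (div_neg_of_neg_of_pos hs hν) : s / ν ≤ ((0:ℤ):ℝ))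
      have h1 : s / ν ≤ (⌈s / ν⌉ : ℝ) := Int.le_ceil _
      have h2 : s ≤ (⌈s / ν⌉ : ℝ) * ν := by
        have := mul_le_mul_of_nonneg_right h1 hν.le
        rwa [div_mul_cancel₀ _ hν'] at this
      rw [abs_of_nonpos (by nlinarith), abs_of_neg hs]; linarith
    · have h1 : s / ν ≤ (⌈s / ν⌉ : ℝ) := Int.le_ceil _
      have h3 : (⌈s / ν⌉ : ℝ) < s / ν + 1 := Int.ceil_lt_add_one _
      have h2 : s ≤ (⌈s / ν⌉ : ℝ) * ν := by
        have := mul_le_mul_of_nonneg_right h1 hν.le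
        rwa [div_mul_cancel₀ _ hν'] at this
      have hdv : (s / ν) * ν = s := div_mul_cancel₀ s hν'
      have h4 : (⌈s / ν⌉ : ℝ) * ν ≤ s + ν := by nlinarith [hdv]
      rw [abs_le]; constructor <;> linarith

/-- (Per-index oscillation estimate.) For an `L`-Lipschitz
`φ : [-1,1] → ℝ`, an approximant `φ̃` with `|φ̃(t) - φ(vt)| ≤ ω₁` on
`{|t| ≤ 1, |v||t| ≤ σ/2}`, a hidden scale `1/2 ≤ |v| ≤ 2`, `0 < h ≤ σ/4` and a grid of
step `ν ∈ (0, ω₁/(2L)]`, the grid oscillation `Δ̃ = max_{|kν| ≤ h}|φ̃(kν) - φ̃(0)|`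
satisfies `Δ_{h/2} - 3ω₁ ≤ Δ̃ ≤ Δ_{2h} + 3ω₁`. -/
theorem stmt11 (σ : ℝ) (hσ : σ ∈ Set.Ioc (0 : ℝ) 1) (L : ℝ) (hL : 0 < L)
    (φ : ℝ → ℝ)
    (hlip : ∀ s t : ℝ, |s| ≤ 1 → |t| ≤ 1 → |φ s - φ t| ≤ L * |s - t|)
    (h : ℝ) (hh : 0 < h) (hhσ : h ≤ σ / 4)
    (ω₁ : ℝ) (hω₁ : 0 < ω₁) (ν : ℝ) (hν : 0 < ν) (hνω : ν ≤ ω₁ / (2 * L))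
    (v : ℝ) (hv₁ : 1 / 2 ≤ |v|) (hv₂ : |v| ≤ 2)
    (φt : ℝ → ℝ)
    (happ : ∀ t : ℝ, |t| ≤ 1 → |v| * |t| ≤ σ / 2 → |φt t - φ (v * t)| ≤ ω₁)
    (Δ₁ Δ₂ D : ℝ)
    (hΔ₁ : IsGreatest {y : ℝ | ∃ t : ℝ, |t| ≤ h / 2 ∧ y = |φ t - φ 0|} Δ₁)
    (hΔ₂ : IsGreatest {y : ℝ | ∃ t : ℝ, |t| ≤ 2 * h ∧ y = |φ t - φ 0|} Δ₂)
    (hD : IsGreatest {y : ℝ | ∃ k : ℤ, |(k : ℝ) * ν| ≤ h ∧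
      y = |φt ((k : ℝ) * ν) - φt 0|} D) :
    Δ₁ - 3 * ω₁ ≤ D ∧ D ≤ Δ₂ + 3 * ω₁ := by
  obtain ⟨hσ0, hσ1⟩ := hσ
  have hv0 : (0 : ℝ) < |v| := by linarith
  have hv0' : v ≠ 0 := by
    intro hv; rw [hv, abs_zero] at hv₁; linarith
  have happ0 : |φt 0 - φ 0| ≤ ω₁ := by
    have := happ 0 (by norm_num) (by rw [abs_zero, mul_zero]; positivity)
    simpa using this
  have hνL : 2 * L * ν ≤ ω₁ := by
    have := (le_div_iff₀ (by positivity : (0:ℝ) < 2 * L)).1 hνω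
    nlinarith
  constructor
  · -- lower bound
    obtain ⟨⟨t₀, ht₀, hΔ₁eq⟩, _⟩ := hΔ₁
    set s : ℝ := t₀ / v with hs
    have hvs : v * s = t₀ := by rw [hs]; field_simp
    have hvsabs : |v| * |s| = |t₀| := by rw [← abs_mul, hvs]
    have hsabs : |s| ≤ h := by
      have : |v| * |s| ≤ |v| * (2 * (h / 2)) := by
        rw [hvsabs]; nlinarith [abs_nonneg s]
      nlinarith [abs_nonneg s]
    obtain ⟨k, hk1, hk2⟩ := grid_pt s ν hν
    have hkh : |(k : ℝ) * ν| ≤ h := hk1.trans hsabs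
    have hmem : |φt ((k : ℝ) * ν) - φt 0| ≤ D := hD.2 ⟨k, hkh, rfl⟩
    have hvk : |v * ((k : ℝ) * ν)| ≤ h / 2 := by
      rw [abs_mul]
      calc |v| * |(k : ℝ) * ν| ≤ |v| * |s| := by nlinarith
        _ = |t₀| := hvsabs
        _ ≤ h / 2 := ht₀
    have hh1 : h ≤ 1 := by linarith
    have happk : |φt ((k : ℝ) * ν) - φ (v * ((k : ℝ) * ν))| ≤ ω₁ := by
      apply happ _ (hkh.trans hh1)
      rw [← abs_mul] at *; linarith [hvk]
    have hlipk : |φ (v * ((k : ℝ) * ν)) - φ t₀| ≤ ω₁ := by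
      have hb1 : |v * ((k : ℝ) * ν)| ≤ 1 := by linarith
      have hb2 : |t₀| ≤ 1 := by linarith
      have := hlip _ _ hb1 hb2
      have hdiff : |v * ((k : ℝ) * ν) - t₀| = |v| * |(k : ℝ) * ν - s| := by
        rw [← abs_mul]; congr 1; rw [← hvs]; ring
      calc |φ (v * ((k : ℝ) * ν)) - φ t₀| ≤ L * |v * ((k : ℝ) * ν) - t₀| := this
        _ = L * (|v| * |(k : ℝ) * ν - s|) := by rw [hdiff]
        _ ≤ L * (2 * ν) := by
            have := mul_le_mul hv₂ hk2 (abs_nonneg _) (by norm_num : (0:ℝ) ≤ 2)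
            nlinarith
        _ ≤ ω₁ := by nlinarith
    have key : φ t₀ - φ 0 =
        (φ t₀ - φ (v * ((k : ℝ) * ν))) + (φ (v * ((k : ℝ) * ν)) - φt ((k : ℝ) * ν))
          + (φt ((k : ℝ) * ν) - φt 0) + (φt 0 - φ 0) := by ring
    have habs : |φ t₀ - φ 0| ≤ |φ t₀ - φ (v * ((k : ℝ) * ν))|
        + |φ (v * ((k : ℝ) * ν)) - φt ((k : ℝ) * ν)|
        + |φt ((k : ℝ) * ν) - φt 0| + |φt 0 - φ 0| := by
      rw [key]
      exact (abs_add_le _ _).trans (by gcongr; exact (abs_add_le _ _).trans (by gcongr; exact abs_add_le _ _))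
    rw [abs_sub_comm] at hlipk happk
    rw [hΔ₁eq]
    linarith
  · -- upper bound
    obtain ⟨⟨k, hk, hDeq⟩, _⟩ := hD
    have hh1 : h ≤ 1 := by linarith
    have hvk : |v * ((k : ℝ) * ν)| ≤ 2 * h := by
      rw [abs_mul]; nlinarith [abs_nonneg ((k : ℝ) * ν)]
    have happk : |φt ((k : ℝ) * ν) - φ (v * ((k : ℝ) * ν))| ≤ ω₁ := by
      apply happ _ (hk.trans hh1)
      rw [← abs_mul]; linarith
    have hmem : |φ (v * ((k : ℝ) * ν)) - φ 0| ≤ Δ₂ := hΔ₂.2 ⟨_, hvk, rfl⟩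
    have key : φt ((k : ℝ) * ν) - φt 0 =
        (φt ((k : ℝ) * ν) - φ (v * ((k : ℝ) * ν)))
          + (φ (v * ((k : ℝ) * ν)) - φ 0) + (φ 0 - φt 0) := by ring
    have habs : |φt ((k : ℝ) * ν) - φt 0| ≤ |φt ((k : ℝ) * ν) - φ (v * ((k : ℝ) * ν))|
        + |φ (v * ((k : ℝ) * ν)) - φ 0| + |φ 0 - φt 0| := by
      rw [key]
      exact (abs_add_le _ _).trans (by gcongr; exact abs_add_le _ _)
    rw [abs_sub_comm] at happ0
    rw [hDeq]
    linarith
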